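/- Under the hypotheses of the previous constraint system, if z_a = 1 for an arc a whose tail is v ≠ r, then by induction there exists a directed path from the root r to v all of whose arcs a'' satisfy z_{a''} = 1 and a'' ∈ Λ(head of a''), provided the graph restricted to {a : z_a = 1} is acyclic except through r. -/
import Mathlib


/-- A walk in a directed graph given by `tail`/`head` maps. -/
def IsWalk {V A : Type*} (tail head : A → V) : V → V → List A → Prop
  | s, t, [] => s = t
  | s, t, a :: l => tail a = s ∧ IsWalk tail head (head a) t l

private lemma isWalk_prefix {V A : Type*} (tail head : A → V) (b : A) :
    ∀ (xs : List A) (s t : V) (ys : List A),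
      IsWalk tail head s t (xs ++ b :: ys) → IsWalk tail head s (tail b) xs
  | [], _, _, _, h => h.1.symm
  | _ :: xs, _, t, ys, h => ⟨h.1, isWalk_prefix tail head b xs _ t ys h.2⟩

/-- if `z` satisfies `∑_{a∈Λ(v)} z_a ≥ ∑_{a∈δ⁺(v)} z_a` for every `v ≠ r`
and the subgraph of z-selected arcs has no directed cycle avoiding `r`, then for every
arc `a` with `z_a = 1` whose tail `v ≠ r` there is a directed path from `r` to `v` all of
whose arcs `a''` satisfy `z_{a''} = 1` and `a'' ∈ Λ(head a'')`. -/
theorem stmt_4 {V A : Type*} [Fintype A] [DecidableEq V] [DecidableEq A]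
    (tail head : A → V) (r : V)
    (Λ : V → Finset A) (hΛ : ∀ v, ∀ a ∈ Λ v, head a = v)
    (z : A → ℕ) (hz01 : ∀ a, z a ≤ 1)
    (hbal : ∀ v : V, v ≠ r →
      ∑ a ∈ Λ v, z a ≥ ∑ a ∈ Finset.univ.filter (fun a => tail a = v), z a)
    (hacyclic : ¬ ∃ (C : List A) (v : V), C ≠ [] ∧ IsWalk tail head v v C ∧
      (∀ b ∈ C, z b = 1) ∧ ∀ b ∈ C, tail b ≠ r) :
    ∀ a : A, z a = 1 → tail a ≠ r →
      ∃ l : List A, IsWalk tail head r (tail a) l ∧ l.Nodup ∧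
        ∀ b ∈ l, z b = 1 ∧ b ∈ Λ (head b) := by
  intro a hza har
  -- extraction of an incoming selected arc
  have getb : ∀ v : V, v ≠ r → (∃ c, tail c = v ∧ z c = 1) →
      ∃ b, b ∈ Λ v ∧ z b = 1 ∧ head b = v := by
    rintro v hv ⟨c, hcv, hcz⟩
    have hcmem : c ∈ Finset.univ.filter (fun a => tail a = v) := by simp [hcv]
    have h1 : 1 ≤ ∑ a ∈ Finset.univ.filter (fun a => tail a = v), z a := by
      calc 1 = z c := hcz.symm
        _ ≤ _ := Finset.single_le_sum (fun i _ => Nat.zero_le _) hcmem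
    have h2 := hbal v hv
    have h3 : ∑ a ∈ Λ v, z a ≠ 0 := by omega
    obtain ⟨b, hbΛ, hbz⟩ := Finset.exists_ne_zero_of_sum_ne_zero h3
    have := hz01 b
    exact ⟨b, hbΛ, by omega, hΛ v b hbΛ⟩
  have aux : ∀ n (v : V) (l : List A), Fintype.card A - l.length ≤ n → v ≠ r →
      l.Nodup → IsWalk tail head v (tail a) l →
      (∀ b ∈ l, z b = 1 ∧ b ∈ Λ (head b) ∧ tail b ≠ r) →
      (∃ c, tail c = v ∧ z c = 1) →
      ∃ l' : List A, IsWalk tail head r (tail a) l' ∧ l'.Nodup ∧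
        ∀ b ∈ l', z b = 1 ∧ b ∈ Λ (head b) := by
    intro n
    induction n with
    | zero =>
      intro v l hn hv hnd hw hl hc
      obtain ⟨b, hbΛ, hbz, hbv⟩ := getb v hv hc
      by_cases hbl : b ∈ l
      · -- cycle, contradiction
        obtain ⟨l₁, l₂, rfl⟩ := List.append_of_mem hbl
        have hw1 : IsWalk tail head v (tail b) l₁ :=
          isWalk_prefix tail head b l₁ v (tail a) l₂ hw
        exact absurd ⟨b :: l₁, tail b, by simp, ⟨rfl, hbv ▸ hw1⟩,
          fun x hx => by
            rcases List.mem_cons.mp hx with h | h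
            · exact h ▸ hbz
            · exact (hl x (by simp [h])).1,
          fun x hx => by
            rcases List.mem_cons.mp hx with h | h
            · exact h ▸ (hl b hbl).2.2
            · exact (hl x (by simp [h])).2.2⟩ hacyclic
      · have hlen : (b :: l).length ≤ Fintype.card A :=
          List.Nodup.length_le_card (by simp [hnd, hbl])
        simp at hlen
        omega
    | succ m ih =>
      intro v l hn hv hnd hw hl hc
      obtain ⟨b, hbΛ, hbz, hbv⟩ := getb v hv hc
      by_cases hbl : b ∈ l
      · obtain ⟨l₁, l₂, rfl⟩ := List.append_of_mem hbl
        have hw1 : IsWalk tail head v (tail b) l₁ :=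
          isWalk_prefix tail head b l₁ v (tail a) l₂ hw
        exact absurd ⟨b :: l₁, tail b, by simp, ⟨rfl, hbv ▸ hw1⟩,
          fun x hx => by
            rcases List.mem_cons.mp hx with h | h
            · exact h ▸ hbz
            · exact (hl x (by simp [h])).1,
          fun x hx => by
            rcases List.mem_cons.mp hx with h | h
            · exact h ▸ (hl b hbl).2.2
            · exact (hl x (by simp [h])).2.2⟩ hacyclic
      · have hw' : IsWalk tail head (tail b) (tail a) (b :: l) := ⟨rfl, hbv ▸ hw⟩
        by_cases hbr : tail b = r
        · refine ⟨b :: l, hbr ▸ hw', by simp [hnd, hbl], ?_⟩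
          intro x hx
          rcases List.mem_cons.mp hx with h | h
          · exact h ▸ ⟨hbz, (hΛ v b hbΛ) ▸ hbv ▸ hbΛ⟩
          · exact ⟨(hl x h).1, (hl x h).2.1⟩
        · refine ih (tail b) (b :: l) (by simp; omega) hbr (by simp [hnd, hbl]) hw' ?_
            ⟨b, rfl, hbz⟩
          intro x hx
          rcases List.mem_cons.mp hx with h | h
          · exact h ▸ ⟨hbz, (hΛ v b hbΛ) ▸ hbv ▸ hbΛ, hbr⟩
          · exact hl x h
  exact aux (Fintype.card A) (tail a) [] (by simp) har (by simp) rfl (by simp) ⟨a, rfl, hza⟩
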